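/- Let ε > 0, s > 1, and let N ≥ 2 be an integer. Set Δ := 2 (2ζ(s)/(s(s+1)))^{1/2}. If Z = (z_1,…,z_N) ∈ ℝ^N satisfies z_1 < z_2 < ⋯ < z_N < z_1 + 1 (extended by z_{i+N} = z_i + 1) and Ẽ(Z) ≤ s^{−1} ζ(s;N)(1 + ε), then the gaps d_i := z_{i+1} − z_i satisfy (1/N) Σ_{i=1}^N | d_i − 1/N | ≤ Δ ε^{1/2} / N. -/

import Mathlib

open scoped BigOperators

/-- `ζ(s) = Σ_{k=1}^∞ k^{-s}`. -/
noncomputable def zetaF (s : ℝ) : ℝ := ∑' n : ℕ, ((n : ℝ) + 1) ^ (-s)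

/-- `Ẽ^k(Z) = (1/(s N^{s+1})) Σ_{i=1}^N (z_{i+k} - z_i)^{-s}`. -/
noncomputable def EtildeK (s : ℝ) (N : ℕ) (z : ℤ → ℝ) (k : ℕ) : ℝ :=
  (1 / (s * (N : ℝ) ^ (s + 1))) *
    ∑ i ∈ Finset.Icc (1 : ℤ) (N : ℤ), (z (i + (k : ℤ)) - z i) ^ (-s)

/-- `Ẽ(Z) = Σ_{k=1}^{(N-1)/2} Ẽ^k(Z)` for odd `N`, and
`Ẽ(Z) = Σ_{k=1}^{N/2-1} Ẽ^k(Z) + (1/2) Ẽ^{N/2}(Z)` for even `N`. -/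
noncomputable def EtildeT (s : ℝ) (N : ℕ) (z : ℤ → ℝ) : ℝ :=
  if N % 2 = 1 then ∑ k ∈ Finset.Icc 1 ((N - 1) / 2), EtildeK s N z k
  else (∑ k ∈ Finset.Icc 1 (N / 2 - 1), EtildeK s N z k) + (1 / 2) * EtildeK s N z (N / 2)

/-- `ζ(s;N) = Σ_{k=1}^{⌊(N-1)/2⌋} k^{-s}`. -/
noncomputable def zetaFN (s : ℝ) (N : ℕ) : ℝ :=
  ∑ k ∈ Finset.Icc 1 ((N - 1) / 2), (k : ℝ) ^ (-s)

/-! Auxiliary analytic lemmas. -/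

lemma aux_tangent {s : ℝ} (hs : 0 < s) {t : ℝ} (ht : 0 < t) :
    1 + s * (1 - t) ≤ t ^ (-s) := by
  have hs1 : (0:ℝ) < s + 1 := by linarith
  have hw : (1:ℝ)/(s+1) + s/(s+1) = 1 := by
    rw [← add_div]; rw [show (1:ℝ)+s = s+1 from by ring]; exact div_self hs1.ne'
  have h := Real.geom_mean_le_arith_mean2_weighted (by positivity) (by positivity)
    (Real.rpow_nonneg ht.le (-s)) ht.le hw
  have hprod : (t ^ (-s)) ^ ((1:ℝ)/(s+1)) * t ^ (s/(s+1)) = 1 := by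
    rw [← Real.rpow_mul ht.le, ← Real.rpow_add ht]
    rw [show -s * (1/(s+1)) + s/(s+1) = 0 by field_simp; ring]
    exact Real.rpow_zero t
  rw [hprod] at h
  have h2 : (s+1) * 1 ≤ (s+1) * (1/(s+1) * t ^ (-s) + s/(s+1) * t) :=
    mul_le_mul_of_nonneg_left h hs1.le
  have h3 : (s+1) * (1/(s+1) * t ^ (-s) + s/(s+1) * t) = t ^ (-s) + s * t := by
    field_simp
  nlinarith [h2, h3]

lemma aux_quad {s : ℝ} (hs : 0 < s) {t : ℝ} (ht : 0 < t) (ht1 : t ≤ 1) :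
    1 + s * (1 - t) + s * (s + 1) / 2 * (1 - t) ^ 2 ≤ t ^ (-s) := by
  set g : ℝ → ℝ := fun x => x ^ (-s) - (1 + s * (1 - x) + s * (s + 1) / 2 * (1 - x) ^ 2) with hg
  have hderiv : ∀ x ∈ Set.Ioo (0:ℝ) 1, HasDerivAt g
      (-s * x ^ (-s - 1) - (-s + s * (s + 1) / 2 * (2 * (1 - x) * (-1)))) x := by
    intro x hx
    have h1 : HasDerivAt (fun x : ℝ => x ^ (-s)) (-s * x ^ (-s - 1)) x := by
      simpa using Real.hasDerivAt_rpow_const (p := -s) (Or.inl (ne_of_gt hx.1))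
    have h2 : HasDerivAt (fun x : ℝ => 1 - x) (-1) x := (hasDerivAt_id x).const_sub 1
    have h3 : HasDerivAt (fun x : ℝ => (1 - x) ^ 2) (2 * (1 - x) ^ 1 * (-1)) x := h2.pow 2
    have h4 : HasDerivAt (fun x : ℝ => 1 + s * (1 - x) + s * (s + 1) / 2 * (1 - x) ^ 2)
        (0 + s * (-1) + s * (s + 1) / 2 * (2 * (1 - x) ^ 1 * (-1))) x :=
      ((hasDerivAt_const x (1:ℝ)).add (h2.const_mul s)).add (h3.const_mul (s * (s+1)/2))
    have : HasDerivAt g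
        (-s * x ^ (-s - 1) - (0 + s * (-1) + s * (s + 1) / 2 * (2 * (1 - x) ^ 1 * (-1)))) x :=
      h1.sub h4
    convert this using 1
    ring
  have hcont : ContinuousOn g (Set.Ioc (0:ℝ) 1) := by
    intro x hx
    have : ContinuousAt g x := by
      have h1 : ContinuousAt (fun x : ℝ => x ^ (-s)) x :=
        Real.continuousAt_rpow_const x (-s) (Or.inl (ne_of_gt hx.1))
      exact h1.sub (by fun_prop)
    exact this.continuousWithinAt
  have hanti : AntitoneOn g (Set.Ioc (0:ℝ) 1) := by
    apply antitoneOn_of_deriv_nonpos (convex_Ioc 0 1) hcont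
    · intro x hx
      rw [interior_Ioc] at hx
      exact (hderiv x hx).differentiableAt.differentiableWithinAt
    · intro x hx
      rw [interior_Ioc] at hx
      rw [(hderiv x hx).deriv]
      have hA := aux_tangent (show (0:ℝ) < s + 1 by linarith) hx.1
      have hpow : x ^ (-(s+1)) = x ^ (-s - 1) := by ring_nf
      rw [hpow] at hA
      nlinarith [hA]
  have h1mem : (1:ℝ) ∈ Set.Ioc (0:ℝ) 1 := by constructor <;> norm_num
  have htmem : t ∈ Set.Ioc (0:ℝ) 1 := ⟨ht, ht1⟩
  have := hanti htmem h1mem ht1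
  have hg1 : g 1 = 0 := by simp [hg, Real.one_rpow]
  rw [hg1] at this
  have : 0 ≤ g t := this
  simp only [hg] at this
  linarith

lemma aux_tangent' {s : ℝ} (hs : 0 < s) {x m : ℝ} (hx : 0 < x) (hm : 0 < m) :
    m ^ (-s) - s * m ^ (-s - 1) * (x - m) ≤ x ^ (-s) := by
  have ht : 0 < x / m := div_pos hx hm
  have hA := aux_tangent hs ht
  have hxm : x ^ (-s) = m ^ (-s) * (x / m) ^ (-s) := by
    rw [← Real.mul_rpow hm.le ht.le, mul_div_cancel₀ x hm.ne']
  have hmul : m ^ (-s) * (1 + s * (1 - x / m)) ≤ m ^ (-s) * ((x/m) ^ (-s)) :=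
    mul_le_mul_of_nonneg_left hA (Real.rpow_nonneg hm.le _)
  rw [← hxm] at hmul
  refine le_trans (le_of_eq ?_) hmul
  rw [show -s - 1 = -s + (-1) by ring, Real.rpow_add hm, Real.rpow_neg_one]
  field_simp
  ring

lemma aux_quad' {s : ℝ} (hs : 0 < s) {x m : ℝ} (hx : 0 < x) (hm : 0 < m) :
    m ^ (-s) - s * m ^ (-s - 1) * (x - m) + s * (s + 1) / 2 * m ^ (-s - 2) * (max (m - x) 0) ^ 2
      ≤ x ^ (-s) := by
  rcases le_or_gt m x with hle | hlt
  · rw [max_eq_right (by linarith)]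
    simpa using aux_tangent' hs hx hm
  · rw [max_eq_left (by linarith)]
    have ht : 0 < x / m := div_pos hx hm
    have ht1 : x / m ≤ 1 := (div_le_one hm).mpr hlt.le
    have hB := aux_quad hs ht ht1
    have hxm : x ^ (-s) = m ^ (-s) * (x / m) ^ (-s) := by
      rw [← Real.mul_rpow hm.le ht.le, mul_div_cancel₀ x hm.ne']
    have hmul : m ^ (-s) * (1 + s * (1 - x / m) + s * (s+1)/2 * (1 - x/m)^2)
        ≤ m ^ (-s) * ((x/m) ^ (-s)) :=
      mul_le_mul_of_nonneg_left hB (Real.rpow_nonneg hm.le _)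
    rw [← hxm] at hmul
    refine le_trans (le_of_eq ?_) hmul
    have e1 : m ^ (-s - 1) = m ^ (-s) * m⁻¹ := by
      rw [show -s - 1 = -s + (-1) by ring, Real.rpow_add hm, Real.rpow_neg_one]
    have e2 : m ^ (-s - 2) = m ^ (-s) * m⁻¹ * m⁻¹ := by
      rw [show -s - 2 = -s + (-1) + (-1) by ring, Real.rpow_add hm, Real.rpow_add hm,
        Real.rpow_neg_one]
    rw [e1, e2]
    field_simp
    ring

/-! Auxiliary summation lemmas. -/

lemma aux_reindex (N : ℕ) (f : ℤ → ℝ) :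
    ∑ i ∈ Finset.Icc (1 : ℤ) (N : ℤ), f i = ∑ j ∈ Finset.range N, f (1 + j) := by
  refine Finset.sum_nbij' (fun i => (i - 1).toNat) (fun j => 1 + (j : ℤ)) ?_ ?_ ?_ ?_ ?_
  · intro a ha
    simp only [Finset.mem_Icc] at ha
    simp only [Finset.mem_range]
    omega
  · intro b hb
    simp only [Finset.mem_range] at hb
    simp only [Finset.mem_Icc]
    omega
  · intro a ha
    simp only [Finset.mem_Icc] at ha
    omega
  · intro b _hb
    omega
  · intro a ha
    simp only [Finset.mem_Icc] at ha
    congr 1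
    omega

lemma aux_telescope (N : ℕ) (f : ℤ → ℝ) :
    ∑ i ∈ Finset.Icc (1 : ℤ) (N : ℤ), (f (i + 1) - f i) = f (1 + N) - f 1 := by
  rw [aux_reindex N (fun i => f (i + 1) - f i)]
  have key := Finset.sum_range_sub (fun j : ℕ => f (1 + (j:ℤ))) N
  rw [show f 1 = f (1 + ((0:ℕ):ℤ)) by norm_num, ← key]
  apply Finset.sum_congr rfl
  intro j _
  rw [show (1 + (j:ℤ) + 1 : ℤ) = 1 + ((j + 1 : ℕ) : ℤ) by push_cast; ring]

lemma aux_shift (N : ℕ) (g : ℤ → ℝ) (hg : ∀ i, g (i + (N:ℤ)) = g i) :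
    ∑ i ∈ Finset.Icc (1 : ℤ) (N : ℤ), g (i + 1) = ∑ i ∈ Finset.Icc (1 : ℤ) (N : ℤ), g i := by
  rw [aux_reindex N (fun i => g (i + 1)), aux_reindex N g]
  have e1 : ∑ j ∈ Finset.range N, g (1 + (j:ℤ) + 1)
      = ∑ j ∈ Finset.range N, (fun j : ℕ => g (1 + (j:ℤ))) (j + 1) := by
    apply Finset.sum_congr rfl
    intro j _
    simp only
    rw [show (1 + ((j + 1 : ℕ):ℤ) : ℤ) = 1 + (j:ℤ) + 1 by push_cast; ring]
  have e2 := Finset.sum_range_succ' (fun j : ℕ => g (1 + (j:ℤ))) N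
  have e3 := Finset.sum_range_succ (fun j : ℕ => g (1 + (j:ℤ))) N
  have e4 : g (1 + (N:ℤ)) = g (1 + ((0:ℕ):ℤ)) := by
    have := hg 1
    simpa using this
  simp only at e1 e2 e3 e4 ⊢
  rw [e1]
  linarith [e2, e3, e4]

lemma aux_gap_sum (N : ℕ) (z : ℤ → ℝ) (hper : ∀ i : ℤ, z (i + (N : ℤ)) = z i + 1) (k : ℕ) :
    ∑ i ∈ Finset.Icc (1 : ℤ) (N : ℤ), (z (i + (k : ℤ)) - z i) = k := by
  induction k with
  | zero => simp
  | succ k ih =>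
    have step : ∀ i : ℤ, z (i + ((k+1 : ℕ) : ℤ)) - z i =
        ((fun i => z (i + (k:ℤ)) - z i) (i + 1)) + (z (i + 1) - z i) := by
      intro i
      simp only
      rw [show i + ((k+1 : ℕ):ℤ) = i + 1 + (k:ℤ) by push_cast; ring]
      ring
    rw [Finset.sum_congr rfl (fun i _ => step i), Finset.sum_add_distrib]
    have hgper : ∀ i : ℤ, (fun i => z (i + (k:ℤ)) - z i) (i + (N:ℤ))
        = (fun i => z (i + (k:ℤ)) - z i) i := by
      intro i
      simp only
      rw [show i + (N:ℤ) + (k:ℤ) = i + (k:ℤ) + (N:ℤ) by ring, hper, hper]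
      ring
    rw [aux_shift N (fun i => z (i + (k:ℤ)) - z i) hgper, ih, aux_telescope N z, hper 1]
    push_cast
    ring

lemma aux_card (N : ℕ) : (Finset.Icc (1:ℤ) (N:ℤ)).card = N := by
  rw [Int.card_Icc]
  omega

/-- Jensen: `k^{-s}/s ≤ Ẽ^k`. -/
lemma aux_jensen {s : ℝ} (hs : 0 < s) {N : ℕ} (hN : 1 ≤ N) {z : ℤ → ℝ}
    (hper : ∀ i : ℤ, z (i + (N : ℤ)) = z i + 1) (hmono : StrictMono z)
    {k : ℕ} (hk : 1 ≤ k) : (k:ℝ) ^ (-s) / s ≤ EtildeK s N z k := by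
  have hN0 : (0:ℝ) < N := by exact_mod_cast Nat.pos_of_ne_zero (by omega)
  have hk0 : (0:ℝ) < k := by exact_mod_cast hk
  set m : ℝ := (k:ℝ) / N with hmdef
  have hm : 0 < m := div_pos hk0 hN0
  have hx : ∀ i : ℤ, 0 < z (i + (k:ℤ)) - z i := by
    intro i
    have : i < i + (k:ℤ) := by
      have : (0:ℤ) < (k:ℤ) := by exact_mod_cast hk
      omega
    linarith [hmono this]
  have hzero : ∑ i ∈ Finset.Icc (1:ℤ) (N:ℤ), ((z (i + (k:ℤ)) - z i) - m) = 0 := by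
    rw [Finset.sum_sub_distrib, aux_gap_sum N z hper k, Finset.sum_const, aux_card N,
      nsmul_eq_mul, hmdef]
    field_simp
    ring
  have hpt : ∀ i ∈ Finset.Icc (1:ℤ) (N:ℤ),
      m ^ (-s) - s * m ^ (-s - 1) * ((z (i + (k:ℤ)) - z i) - m) ≤ (z (i + (k:ℤ)) - z i) ^ (-s) :=
    fun i _ => aux_tangent' hs (hx i) hm
  have hsum := Finset.sum_le_sum hpt
  have hlhs : ∑ i ∈ Finset.Icc (1:ℤ) (N:ℤ),
      (m ^ (-s) - s * m ^ (-s - 1) * ((z (i + (k:ℤ)) - z i) - m)) = (N:ℝ) * m ^ (-s) := by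
    rw [Finset.sum_sub_distrib, Finset.sum_const, aux_card N, ← Finset.mul_sum, hzero,
      nsmul_eq_mul]
    ring
  rw [hlhs] at hsum
  have hfactor : (0:ℝ) < 1 / (s * (N:ℝ) ^ (s+1)) := by positivity
  have := mul_le_mul_of_nonneg_left hsum hfactor.le
  refine le_trans (le_of_eq ?_) this
  have hm_s : m ^ (-s) = (k:ℝ)^(-s) * (N:ℝ)^s := by
    rw [hmdef, Real.div_rpow hk0.le hN0.le, Real.rpow_neg hN0.le]
    field_simp [Real.rpow_natCast]
  have hNs1 : (N:ℝ) ^ (s+1) = (N:ℝ)^s * N := by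
    rw [Real.rpow_add hN0, Real.rpow_one]
  rw [hm_s, hNs1]
  have h1 : (N:ℝ)^s ≠ 0 := ne_of_gt (Real.rpow_pos_of_pos hN0 s)
  field_simp

/-- Refined bound for `Ẽ^1`. -/
lemma aux_refined {s : ℝ} (hs : 0 < s) {N : ℕ} (hN : 1 ≤ N) {z : ℤ → ℝ}
    (hper : ∀ i : ℤ, z (i + (N : ℤ)) = z i + 1) (hmono : StrictMono z) :
    1/s + (s+1)/2 * N * (∑ i ∈ Finset.Icc (1:ℤ) (N:ℤ), (max (1/(N:ℝ) - (z (i+1) - z i)) 0)^2)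
      ≤ EtildeK s N z 1 := by
  have hN0 : (0:ℝ) < N := by exact_mod_cast Nat.pos_of_ne_zero (by omega)
  set m : ℝ := 1 / N with hmdef
  have hm : 0 < m := by positivity
  have hx : ∀ i : ℤ, 0 < z (i + 1) - z i := fun i => by linarith [hmono (show i < i + 1 by omega)]
  have hgap : ∑ i ∈ Finset.Icc (1:ℤ) (N:ℤ), (z (i + 1) - z i) = 1 := by
    have := aux_gap_sum N z hper 1
    simpa using this
  have hzero : ∑ i ∈ Finset.Icc (1:ℤ) (N:ℤ), ((z (i + 1) - z i) - m) = 0 := by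
    rw [Finset.sum_sub_distrib, hgap, Finset.sum_const, aux_card N, nsmul_eq_mul, hmdef]
    field_simp
    ring
  have hpt : ∀ i ∈ Finset.Icc (1:ℤ) (N:ℤ),
      m ^ (-s) - s * m ^ (-s - 1) * ((z (i + 1) - z i) - m)
        + s * (s+1)/2 * m ^ (-s - 2) * (max (m - (z (i+1) - z i)) 0)^2
      ≤ (z (i + 1) - z i) ^ (-s) :=
    fun i _ => aux_quad' hs (hx i) hm
  have hsum := Finset.sum_le_sum hpt
  set A : ℝ := ∑ i ∈ Finset.Icc (1:ℤ) (N:ℤ), (max (m - (z (i+1) - z i)) 0)^2 with hA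
  have hlhs : ∑ i ∈ Finset.Icc (1:ℤ) (N:ℤ),
      (m ^ (-s) - s * m ^ (-s - 1) * ((z (i + 1) - z i) - m)
        + s * (s+1)/2 * m ^ (-s - 2) * (max (m - (z (i+1) - z i)) 0)^2)
      = (N:ℝ) * m ^ (-s) + s * (s+1)/2 * m ^ (-s-2) * A := by
    rw [Finset.sum_add_distrib, Finset.sum_sub_distrib, Finset.sum_const, aux_card N,
      ← Finset.mul_sum, hzero, ← Finset.mul_sum, nsmul_eq_mul, ← hA]
    ring
  rw [hlhs] at hsum
  have hfactor : (0:ℝ) < 1 / (s * (N:ℝ) ^ (s+1)) := by positivity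
  have hmul := mul_le_mul_of_nonneg_left hsum hfactor.le
  have hE1 : EtildeK s N z 1 = (1 / (s * (N:ℝ) ^ (s+1))) *
      ∑ i ∈ Finset.Icc (1:ℤ) (N:ℤ), (z (i + 1) - z i) ^ (-s) := by
    unfold EtildeK
    norm_num
  rw [hE1]
  refine le_trans (le_of_eq ?_) hmul
  have hm_s : m ^ (-s) = (N:ℝ)^s := by
    rw [hmdef, one_div, Real.inv_rpow hN0.le, Real.rpow_neg hN0.le, inv_inv]
  have hm_s2 : m ^ (-s-2) = (N:ℝ)^s * N * N := by
    rw [hmdef, one_div, Real.inv_rpow hN0.le,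
      show -s - 2 = -(s+1+1) by ring, Real.rpow_neg hN0.le, inv_inv,
      Real.rpow_add hN0, Real.rpow_add hN0, Real.rpow_one]
  have hNs1 : (N:ℝ) ^ (s+1) = (N:ℝ)^s * N := by
    rw [Real.rpow_add hN0, Real.rpow_one]
  rw [hm_s, hm_s2, hNs1]
  have h1 : (N:ℝ)^s ≠ 0 := ne_of_gt (Real.rpow_pos_of_pos hN0 s)
  field_simp

lemma aux_summable {s : ℝ} (hs : 1 < s) : Summable (fun n : ℕ => ((n : ℝ) + 1) ^ (-s)) := by
  have h1 : Summable (fun n : ℕ => (n : ℝ) ^ (-s)) :=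
    Real.summable_nat_rpow.mpr (by linarith)
  have h2 : Summable (fun n : ℕ => ((n + 1 : ℕ) : ℝ) ^ (-s)) :=
    (summable_nat_add_iff 1).mpr h1
  refine h2.congr fun n => ?_
  push_cast
  ring_nf

lemma aux_zetaFN_nonneg (s : ℝ) (N : ℕ) : 0 ≤ zetaFN s N := by
  unfold zetaFN
  exact Finset.sum_nonneg fun k _ => Real.rpow_nonneg (by positivity) _

lemma aux_zetaFN_le {s : ℝ} (hs : 1 < s) (N : ℕ) : zetaFN s N ≤ zetaF s := by
  unfold zetaFN zetaF
  set M := (N - 1) / 2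
  have hre : ∑ k ∈ Finset.Icc 1 M, (k : ℝ) ^ (-s)
      = ∑ j ∈ Finset.range M, ((j : ℝ) + 1) ^ (-s) := by
    refine Finset.sum_nbij' (fun k => k - 1) (fun j => j + 1) ?_ ?_ ?_ ?_ ?_
    · intro a ha; simp only [Finset.mem_Icc] at ha; simp only [Finset.mem_range]; omega
    · intro b hb; simp only [Finset.mem_range] at hb; simp only [Finset.mem_Icc]; omega
    · intro a ha; simp only [Finset.mem_Icc] at ha; omega
    · intro b _; omega
    · intro a ha
      simp only [Finset.mem_Icc] at ha
      congr 1
      have : ((a - 1 : ℕ) : ℝ) = (a : ℝ) - 1 := by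
        have : (1:ℕ) ≤ a := ha.1
        push_cast [this]
        ring
      rw [this]
      ring
  rw [hre]
  exact Summable.sum_le_tsum (Finset.range M)
    (fun j _ => Real.rpow_nonneg (by positivity) _) (aux_summable hs)

theorem stmt18 (ε : ℝ) (hε : 0 < ε) (s : ℝ) (hs : 1 < s) (N : ℕ) (hN : 2 ≤ N)
    (z : ℤ → ℝ)
    (hper : ∀ i : ℤ, z (i + (N : ℤ)) = z i + 1)
    (hsort : ∀ i : ℤ, z i < z (i + 1))
    (hE : EtildeT s N z ≤ s⁻¹ * zetaFN s N * (1 + ε)) :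
    (1 / (N : ℝ)) * ∑ i ∈ Finset.Icc (1 : ℤ) (N : ℤ), |z (i + 1) - z i - 1 / (N : ℝ)| ≤
      (2 * Real.sqrt (2 * zetaF s / (s * (s + 1)))) * Real.sqrt ε / (N : ℝ) := by
  have hs0 : (0:ℝ) < s := by linarith
  have hs1 : (0:ℝ) < s + 1 := by linarith
  have hmono : StrictMono z := strictMono_int_of_lt_succ hsort
  have hN0 : (0:ℝ) < N := by exact_mod_cast Nat.pos_of_ne_zero (by omega)
  rcases lt_or_ge N 3 with hlt | hge
  · -- case N = 2 : contradiction
    exfalso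
    have hN2 : N = 2 := by omega
    subst hN2
    have hT : EtildeT s 2 z = (1/2) * EtildeK s 2 z 1 := by
      unfold EtildeT
      norm_num
    have hz2 : zetaFN s 2 = 0 := by
      unfold zetaFN
      norm_num
    have hpos : 0 < EtildeK s 2 z 1 := by
      unfold EtildeK
      apply mul_pos (by positivity)
      apply Finset.sum_pos
      · intro i _
        apply Real.rpow_pos_of_pos
        have h1 : i < i + ((1:ℕ):ℤ) := by simp
        linarith [hmono h1]
      · exact ⟨1, by norm_num⟩
    rw [hT, hz2] at hE
    simp at hE
    linarith
  · -- main case N ≥ 3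
    set I := Finset.Icc (1:ℤ) (N:ℤ) with hI
    set A : ℝ := ∑ i ∈ I, (max (1/(N:ℝ) - (z (i+1) - z i)) 0)^2 with hAdef
    set S : ℝ := ∑ i ∈ I, max (1/(N:ℝ) - (z (i+1) - z i)) 0 with hSdef
    have hA0 : 0 ≤ A := Finset.sum_nonneg fun i _ => by positivity
    have hS0 : 0 ≤ S := Finset.sum_nonneg fun i _ => le_max_right _ _
    set M := (N - 1) / 2 with hM
    have hM1 : 1 ≤ M := by omega
    -- lower bound for the truncated-sum part
    have hpart : zetaFN s N / s + (s+1)/2 * N * A ≤ ∑ k ∈ Finset.Icc 1 M, EtildeK s N z k := by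
      have hptF : ∀ k ∈ Finset.Icc 1 M, 0 ≤ EtildeK s N z k - (k:ℝ)^(-s)/s := by
        intro k hk
        simp only [Finset.mem_Icc] at hk
        linarith [aux_jensen hs0 (show 1 ≤ N by omega) hper hmono hk.1]
      have h1mem : 1 ∈ Finset.Icc 1 M := by simp [hM1]
      have hsingle := Finset.single_le_sum hptF h1mem
      have hsub : ∑ k ∈ Finset.Icc 1 M, (EtildeK s N z k - (k:ℝ)^(-s)/s)
          = ∑ k ∈ Finset.Icc 1 M, EtildeK s N z k - ∑ k ∈ Finset.Icc 1 M, (k:ℝ)^(-s)/s :=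
        Finset.sum_sub_distrib _ _
      have hzeta : ∑ k ∈ Finset.Icc 1 M, (k:ℝ)^(-s)/s = zetaFN s N / s := by
        rw [← Finset.sum_div]
        rfl
      have href := aux_refined hs0 (show 1 ≤ N by omega) hper hmono
      have h1pow : ((1:ℕ):ℝ)^(-s) = 1 := by
        rw [Nat.cast_one, Real.one_rpow]
      rw [hsub, hzeta, h1pow] at hsingle
      have : (s+1)/2 * N * A ≤ EtildeK s N z 1 - 1/s := by linarith [href]
      linarith
    -- EtildeT lower bound
    have hT : zetaFN s N / s + (s+1)/2 * N * A ≤ EtildeT s N z := by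
      unfold EtildeT
      by_cases hpar : N % 2 = 1
      · rw [if_pos hpar]
        exact hpart
      · rw [if_neg hpar]
        have hM2 : N / 2 - 1 = M := by omega
        have hhalf : 0 ≤ EtildeK s N z (N/2) := by
          unfold EtildeK
          apply mul_nonneg (by positivity)
          apply Finset.sum_nonneg
          intro i _
          apply Real.rpow_nonneg
          have h1 : i < i + ((N/2:ℕ):ℤ) := by
            have : (0:ℤ) < ((N/2:ℕ):ℤ) := by exact_mod_cast Nat.pos_of_ne_zero (by omega)
            omega
          linarith [hmono h1]
        rw [hM2]
        nlinarith [hpart, hhalf]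
    -- combine with hE
    have hzfn0 : 0 ≤ zetaFN s N := aux_zetaFN_nonneg s N
    have hAbound : (s+1)/2 * N * A ≤ zetaFN s N * ε / s := by
      have : s⁻¹ * zetaFN s N * (1 + ε) = zetaFN s N / s + zetaFN s N * ε / s := by
        field_simp
      rw [this] at hE
      linarith [hT]
    have hzF0 : 0 ≤ zetaF s := tsum_nonneg fun n => Real.rpow_nonneg (by positivity) _
    have hzle : zetaFN s N ≤ zetaF s := aux_zetaFN_le hs N
    -- Cauchy-Schwarz
    have hCS : S^2 ≤ (N:ℝ) * A := by
      have := sq_sum_le_card_mul_sum_sq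
        (s := I) (f := fun i => max (1/(N:ℝ) - (z (i+1) - z i)) 0)
      rw [hI] at this
      rw [aux_card N] at this
      exact_mod_cast this
    have hS2 : S^2 ≤ 2 * zetaF s / (s * (s+1)) * ε := by
      have h1 : (N:ℝ) * A ≤ (N:ℝ) * (2 * (zetaFN s N * ε / s) / ((s+1) * N)) := by
        apply mul_le_mul_of_nonneg_left _ hN0.le
        rw [le_div_iff₀ (by positivity)]
        nlinarith [hAbound]
      have h2 : (N:ℝ) * (2 * (zetaFN s N * ε / s) / ((s+1) * N)) = 2 * zetaFN s N / (s * (s+1)) * ε := by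
        field_simp
      have h3 : 2 * zetaFN s N / (s * (s+1)) * ε ≤ 2 * zetaF s / (s * (s+1)) * ε := by
        apply mul_le_mul_of_nonneg_right _ hε.le
        apply div_le_div_of_nonneg_right ?_ (by positivity)
        linarith
      linarith [hCS, h1]
    -- bound S
    set Q : ℝ := Real.sqrt (2 * zetaF s / (s * (s+1))) with hQ
    have hSle : S ≤ Q * Real.sqrt ε := by
      have h4 := Real.sqrt_le_sqrt hS2
      rw [Real.sqrt_sq hS0] at h4
      rw [Real.sqrt_mul (by positivity) ε] at h4
      exact h4
    -- absolute value sum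
    have hgap : ∑ i ∈ I, (z (i + 1) - z i) = 1 := by
      have := aux_gap_sum N z hper 1
      rw [hI]
      simpa using this
    have hzero : ∑ i ∈ I, (z (i + 1) - z i - 1/(N:ℝ)) = 0 := by
      rw [Finset.sum_sub_distrib, hgap, Finset.sum_const, hI, aux_card N, nsmul_eq_mul]
      field_simp
      ring
    have habs : ∑ i ∈ I, |z (i + 1) - z i - 1/(N:ℝ)| = 2 * S := by
      have hpt : ∀ i ∈ I, |z (i + 1) - z i - 1/(N:ℝ)|
          = (z (i + 1) - z i - 1/(N:ℝ)) + 2 * max (1/(N:ℝ) - (z (i+1) - z i)) 0 := by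
        intro i _
        rcases le_total (z (i + 1) - z i - 1/(N:ℝ)) 0 with h | h
        · rw [abs_of_nonpos h, max_eq_left (by linarith)]
          ring
        · rw [abs_of_nonneg h, max_eq_right (by linarith)]
          ring
      rw [Finset.sum_congr rfl hpt, Finset.sum_add_distrib, hzero, ← Finset.mul_sum, ← hSdef]
      ring
    rw [habs]
    have hfin : (1/(N:ℝ)) * (2 * S) ≤ 2 * Q * Real.sqrt ε / N := by
      have hmul := mul_le_mul_of_nonneg_left hSle (show (0:ℝ) ≤ 2/N by positivity)
      calc (1/(N:ℝ)) * (2 * S) = 2/N * S := by ring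
        _ ≤ 2/N * (Q * Real.sqrt ε) := hmul
        _ = 2 * Q * Real.sqrt ε / N := by ring
    calc (1/(N:ℝ)) * (2 * S) ≤ 2 * Q * Real.sqrt ε / N := hfin
      _ = 2 * Real.sqrt (2 * zetaF s / (s * (s + 1))) * Real.sqrt ε / N := by rw [hQ]
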